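/- The curve Γ₁ = ∇v(S¹ ∩ {x₂ ≥ |x₁|}), where v(x₁,x₂) = (x₂² - x₁²)/(√2|x|) on ℝ², is the graph {(s, φ(s)) : s ∈ [-1,1]} of an even function φ that is smooth and uniformly convex on (-1,1), C¹ up to the endpoints, with φ(±1) = 1 and φ'(±1) = ±1. -/

import Mathlib

open Set

/-- `v(x₁,x₂) = (1/√2)(x₂² - x₁²)/|x|` on `ℝ²`. -/
noncomputable def v2 (x : ℝ × ℝ) : ℝ :=
  (x.2 ^ 2 - x.1 ^ 2) / (Real.sqrt 2 * Real.sqrt (x.1 ^ 2 + x.2 ^ 2))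

/-- the gradient map `∇v`. -/
noncomputable def gradv (x : ℝ × ℝ) : ℝ × ℝ :=
  (fderiv ℝ v2 x (1, 0), fderiv ℝ v2 x (0, 1))

/-- `Γ₁ = ∇v(S¹ ∩ {x₂ ≥ |x₁|})`. -/
noncomputable def Gamma1 : Set (ℝ × ℝ) :=
  gradv '' {x : ℝ × ℝ | x.1 ^ 2 + x.2 ^ 2 = 1 ∧ |x.1| ≤ x.2}

/-!
On the unit circle `∇v(x) = (x₁(2x₁² - 3), x₂(3 - 2x₂²)) / √2`. The quarter arc `x₂ ≥ |x₁|` is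
`arcPoint w = (-√2 sin w, √(cos 2w))` for `|w| ≤ π/6`, and the triple-angle formula turns the
first coordinate of `∇v(arcPoint w)` into `sin 3w`. Hence `Γ₁` is the graph of
`phi s = phiAngle w` with `w = arcsin(s)/3`. Differentiating through `s = sin 3w` gives
`phi' = psiAngle w = √2 sin w / √(cos 2w)` and `phi'' = √2 cos w / (3 cos 3w (cos 2w)^{3/2}) ≥ 1/6`;
as `phi'` stays continuous up to `w = ±π/6`, it gives the one-sided derivatives `±1` at `s = ±1`.
-/

open Real Topology Filter
open scoped ContDiff

lemma HasFDerivAt.hasDerivAt_fst_slice {F : Type*} [NormedAddCommGroup F] [NormedSpace ℝ F]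
    {f : ℝ × ℝ → F} {f' : ℝ × ℝ →L[ℝ] F} {x : ℝ × ℝ} (hf : HasFDerivAt f f' x) :
    HasDerivAt (fun t => f (t, x.2)) (f' (1, 0)) x.1 :=
  hf.comp_hasDerivAt x.1 ((hasDerivAt_id x.1).prodMk (hasDerivAt_const x.1 x.2))

lemma HasFDerivAt.hasDerivAt_snd_slice {F : Type*} [NormedAddCommGroup F] [NormedSpace ℝ F]
    {f : ℝ × ℝ → F} {f' : ℝ × ℝ →L[ℝ] F} {x : ℝ × ℝ} (hf : HasFDerivAt f f' x) :
    HasDerivAt (fun t => f (x.1, t)) (f' (0, 1)) x.2 :=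
  hf.comp_hasDerivAt x.2 ((hasDerivAt_const x.2 x.1).prodMk (hasDerivAt_id x.2))

lemma hasDerivWithinAt_Icc_of_hasDerivAt_Ioo {E : Type*} [NormedAddCommGroup E] [NormedSpace ℝ E]
    {f f' : ℝ → E} {a b x : ℝ} (hab : a < b)
    (hf : ContinuousOn f (Icc a b)) (hf' : ContinuousOn f' (Icc a b))
    (hd : ∀ y ∈ Ioo a b, HasDerivAt f (f' y) y) (hx : x ∈ Icc a b) :
    HasDerivWithinAt f (f' x) (Icc a b) x := by
  rw [← closure_Ioo hab.ne, hasDerivWithinAt_iff_hasFDerivWithinAt]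
  refine hasFDerivWithinAt_closure_of_tendsto_fderiv
    (fun y hy => (hd y hy).differentiableAt.differentiableWithinAt) (convex_Ioo a b) isOpen_Ioo
    (by rw [closure_Ioo hab.ne]; exact fun y hy => (hf y hy).mono Ioo_subset_Icc_self) ?_
  have hlim : Tendsto f' (𝓝[Ioo a b] x) (𝓝 (f' x)) := (hf' x hx).mono Ioo_subset_Icc_self
  refine ((ContinuousLinearMap.toSpanSingletonCLE.continuous.tendsto _).comp hlim).congr' ?_
  filter_upwards [self_mem_nhdsWithin] with y hy
  exact (hd y hy).hasFDerivAt.fderiv.symm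

lemma hasDerivAt_v2_fst_slice {a b : ℝ} (h : 0 < a ^ 2 + b ^ 2) :
    HasDerivAt (fun t => v2 (t, b))
      (-a * (a ^ 2 + 3 * b ^ 2) / (√2 * (a ^ 2 + b ^ 2) * √(a ^ 2 + b ^ 2))) a := by
  have hq : HasDerivAt (fun t => t ^ 2 + b ^ 2) (2 * a) a := by
    simpa using (hasDerivAt_pow 2 a).add_const (b ^ 2)
  have hn : HasDerivAt (fun t => b ^ 2 - t ^ 2) (-(2 * a)) a := by
    simpa using (hasDerivAt_pow 2 a).const_sub (b ^ 2)
  refine (hn.div ((hq.sqrt h.ne').const_mul √2) (by positivity)).congr_deriv ?_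
  field_simp
  rw [sq_sqrt h.le]
  ring

lemma hasDerivAt_v2_snd_slice {a b : ℝ} (h : 0 < a ^ 2 + b ^ 2) :
    HasDerivAt (fun t => v2 (a, t))
      (b * (3 * a ^ 2 + b ^ 2) / (√2 * (a ^ 2 + b ^ 2) * √(a ^ 2 + b ^ 2))) b := by
  have hq : HasDerivAt (fun t => a ^ 2 + t ^ 2) (2 * b) b := by
    simpa using (hasDerivAt_pow 2 b).const_add (a ^ 2)
  have hn : HasDerivAt (fun t => t ^ 2 - a ^ 2) (2 * b) b := by
    simpa using (hasDerivAt_pow 2 b).sub_const (a ^ 2)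
  refine (hn.div ((hq.sqrt h.ne').const_mul √2) (by positivity)).congr_deriv ?_
  field_simp
  rw [sq_sqrt h.le]
  ring

lemma differentiableAt_v2 {x : ℝ × ℝ} (hx : 0 < x.1 ^ 2 + x.2 ^ 2) : DifferentiableAt ℝ v2 x := by
  unfold v2
  fun_prop (disch := first | positivity | exact hx.ne')

lemma gradv_apply {x : ℝ × ℝ} (hx : 0 < x.1 ^ 2 + x.2 ^ 2) :
    gradv x =
      (-x.1 * (x.1 ^ 2 + 3 * x.2 ^ 2) / (√2 * (x.1 ^ 2 + x.2 ^ 2) * √(x.1 ^ 2 + x.2 ^ 2)),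
        x.2 * (3 * x.1 ^ 2 + x.2 ^ 2) / (√2 * (x.1 ^ 2 + x.2 ^ 2) * √(x.1 ^ 2 + x.2 ^ 2))) := by
  have hd := (differentiableAt_v2 hx).hasFDerivAt
  exact Prod.ext (hd.hasDerivAt_fst_slice.unique (hasDerivAt_v2_fst_slice hx))
    (hd.hasDerivAt_snd_slice.unique (hasDerivAt_v2_snd_slice hx))

lemma gradv_apply_of_mem_circle {x : ℝ × ℝ} (hx : x.1 ^ 2 + x.2 ^ 2 = 1) :
    gradv x = (x.1 * (2 * x.1 ^ 2 - 3) / √2, x.2 * (3 - 2 * x.2 ^ 2) / √2) := by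
  rw [gradv_apply (by rw [hx]; exact one_pos), hx, sqrt_one, mul_one, mul_one, Prod.mk.injEq]
  constructor <;> congr 1
  · linear_combination (-3 * x.1) * hx
  · linear_combination (3 * x.2) * hx

section

variable {s w : ℝ}

noncomputable def thirdArcsin (s : ℝ) : ℝ := arcsin s / 3

noncomputable def phiAngle (w : ℝ) : ℝ := √(cos (2 * w)) * (3 - 2 * cos (2 * w)) / √2

noncomputable def psiAngle (w : ℝ) : ℝ := √2 * sin w / √(cos (2 * w))

lemma abs_sin_le_half (hw : w ∈ Icc (-(π / 6)) (π / 6)) : |sin w| ≤ 1 / 2 := by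
  rw [abs_le, ← sin_pi_div_six, ← sin_neg]
  constructor <;> apply sin_le_sin_of_le_of_le_pi_div_two <;> linarith [hw.1, hw.2, pi_pos]

lemma half_le_cos_two_mul (hw : w ∈ Icc (-(π / 6)) (π / 6)) : 1 / 2 ≤ cos (2 * w) := by
  have := abs_sin_le_half hw
  rw [cos_two_mul_eq_one_sub]
  nlinarith [abs_nonneg (sin w), sq_abs (sin w)]

lemma half_le_cos (hw : w ∈ Icc (-(π / 6)) (π / 6)) : 1 / 2 ≤ cos w := by
  have h2 := half_le_cos_two_mul hw
  have h0 : 0 ≤ cos w :=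
    cos_nonneg_of_mem_Icc ⟨by linarith [hw.1, pi_pos], by linarith [hw.2, pi_pos]⟩
  rw [cos_two_mul] at h2
  nlinarith [cos_le_one w]

lemma one_div_six_le_of_mem_Icc (hw : w ∈ Icc (-(π / 6)) (π / 6)) (h3 : 0 < cos (3 * w)) :
    1 / 6 ≤ √2 * cos w / (cos (2 * w) * √(cos (2 * w))) / (3 * cos (3 * w)) := by
  have hc2 := half_le_cos_two_mul hw
  have hnum : 1 / 2 ≤ √2 * cos w := by nlinarith [half_le_cos hw, one_lt_sqrt_two]
  have hden : cos (2 * w) * √(cos (2 * w)) * (3 * cos (3 * w)) ≤ 3 := by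
    have := mul_le_one₀ (cos_le_one (2 * w)) (sqrt_nonneg _) (sqrt_le_one.2 (cos_le_one (2 * w)))
    nlinarith [cos_le_one (3 * w)]
  rw [div_div]
  calc (1 : ℝ) / 6 = 1 / 2 / 3 := by norm_num
    _ ≤ _ := div_le_div₀ (by positivity) hnum (by positivity) hden

lemma thirdArcsin_mem (s : ℝ) : thirdArcsin s ∈ Icc (-(π / 6)) (π / 6) := by
  have := arcsin_mem_Icc s
  constructor <;> unfold thirdArcsin <;> linarith [this.1, this.2]

lemma thirdArcsin_neg (s : ℝ) : thirdArcsin (-s) = -thirdArcsin s := by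
  simp [thirdArcsin, arcsin_neg, neg_div]

lemma thirdArcsin_one : thirdArcsin 1 = π / 6 := by
  rw [thirdArcsin, arcsin_one]; ring

lemma sin_three_mul_thirdArcsin (hs : s ∈ Icc (-1) 1) : sin (3 * thirdArcsin s) = s := by
  rw [thirdArcsin, mul_div_cancel₀ _ three_ne_zero, sin_arcsin hs.1 hs.2]

lemma cos_three_mul_thirdArcsin (s : ℝ) : cos (3 * thirdArcsin s) = √(1 - s ^ 2) := by
  rw [thirdArcsin, mul_div_cancel₀ _ three_ne_zero, cos_arcsin]

lemma thirdArcsin_sin_three_mul (hw : w ∈ Icc (-(π / 6)) (π / 6)) :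
    thirdArcsin (sin (3 * w)) = w := by
  rw [thirdArcsin, arcsin_sin (by linarith [hw.1]) (by linarith [hw.2])]
  ring

@[fun_prop]
lemma continuous_thirdArcsin : Continuous thirdArcsin := continuous_arcsin.div_const 3

lemma hasDerivAt_comp_thirdArcsin {g : ℝ → ℝ} {d : ℝ} (hg : HasDerivAt g d (thirdArcsin s))
    (hs : s ∈ Ioo (-1) 1) :
    HasDerivAt (fun t => g (thirdArcsin t)) (d / (3 * cos (3 * thirdArcsin s))) s := by
  have h := hg.comp s ((hasDerivAt_arcsin hs.1.ne' hs.2.ne).div_const 3)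
  rw [cos_three_mul_thirdArcsin]
  exact h.congr_deriv (by ring)

lemma cos_three_mul_thirdArcsin_pos (hs : s ∈ Ioo (-1) 1) : 0 < cos (3 * thirdArcsin s) := by
  rw [cos_three_mul_thirdArcsin]
  exact sqrt_pos.2 (by nlinarith [hs.1, hs.2])

lemma hasDerivAt_cos_two_mul (w : ℝ) :
    HasDerivAt (fun u => cos (2 * u)) (-(2 * sin (2 * w))) w := by
  simpa [mul_comm] using ((hasDerivAt_id w).const_mul 2).cos

lemma hasDerivAt_phiAngle (hw : 0 < cos (2 * w)) :
    HasDerivAt phiAngle (3 * cos (3 * w) * psiAngle w) w := by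
  have hc := hasDerivAt_cos_two_mul w
  refine ((hc.sqrt hw.ne').mul (hc.const_mul 2 |>.const_sub 3)).div_const √2 |>.congr_deriv ?_
  rw [psiAngle, sin_two_mul, cos_three_mul]
  field_simp
  rw [sq_sqrt hw.le, sq_sqrt zero_le_two, cos_two_mul]
  ring

lemma hasDerivAt_psiAngle (hw : 0 < cos (2 * w)) :
    HasDerivAt psiAngle (√2 * cos w / (cos (2 * w) * √(cos (2 * w)))) w := by
  have hr : 0 < √(cos (2 * w)) := sqrt_pos.2 hw
  refine (((hasDerivAt_sin w).const_mul √2).div ((hasDerivAt_cos_two_mul w).sqrt hw.ne')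
    hr.ne').congr_deriv ?_
  rw [sin_two_mul]
  field_simp
  rw [sq_sqrt hw.le, cos_two_mul, sin_sq]
  ring

noncomputable def phi (s : ℝ) : ℝ := phiAngle (thirdArcsin s)

noncomputable def psi (s : ℝ) : ℝ := psiAngle (thirdArcsin s)

lemma cos_two_mul_thirdArcsin_pos (s : ℝ) : 0 < cos (2 * thirdArcsin s) :=
  one_half_pos.trans_le (half_le_cos_two_mul (thirdArcsin_mem s))

lemma phi_neg (s : ℝ) : phi (-s) = phi s := by
  simp [phi, phiAngle, thirdArcsin_neg]

lemma psi_neg (s : ℝ) : psi (-s) = -psi s := by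
  simp [psi, psiAngle, thirdArcsin_neg, neg_div]

lemma cos_two_mul_thirdArcsin_one : cos (2 * thirdArcsin 1) = 1 / 2 := by
  rw [thirdArcsin_one, show 2 * (π / 6) = π / 3 by ring, cos_pi_div_three]

lemma phi_one : phi 1 = 1 := by
  rw [phi, phiAngle, cos_two_mul_thirdArcsin_one, sqrt_div' _ zero_le_two, sqrt_one]
  field_simp
  rw [sq_sqrt zero_le_two]
  norm_num

lemma psi_one : psi 1 = 1 := by
  rw [psi, psiAngle, cos_two_mul_thirdArcsin_one, thirdArcsin_one, sin_pi_div_six,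
    sqrt_div' _ zero_le_two, sqrt_one]
  field_simp
  exact sq_sqrt zero_le_two

lemma continuous_phi : Continuous phi := by
  unfold phi phiAngle
  fun_prop

lemma continuous_psi : Continuous psi := by
  unfold psi psiAngle
  exact Continuous.div (by fun_prop) (by fun_prop)
    fun s => (sqrt_pos.2 (cos_two_mul_thirdArcsin_pos s)).ne'

lemma contDiffOn_phi : ContDiffOn ℝ ω phi (Ioo (-1) 1) := by
  intro s hs
  have hθ : ContDiffAt ℝ ω thirdArcsin s :=
    (contDiffAt_arcsin hs.1.ne' hs.2.ne).div_const 3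
  have hc : ContDiffAt ℝ ω (fun t => cos (2 * thirdArcsin t)) s :=
    contDiff_cos.contDiffAt.comp s (contDiffAt_const.mul hθ)
  have hr := (contDiffAt_sqrt (cos_two_mul_thirdArcsin_pos s).ne').comp s hc
  exact ((hr.mul (contDiffAt_const.sub (contDiffAt_const.mul hc))).div_const _).contDiffWithinAt

lemma hasDerivAt_phi (hs : s ∈ Ioo (-1) 1) : HasDerivAt phi (psi s) s := by
  have h := hasDerivAt_comp_thirdArcsin (hasDerivAt_phiAngle (cos_two_mul_thirdArcsin_pos s)) hs
  refine h.congr_deriv ?_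
  have := cos_three_mul_thirdArcsin_pos hs
  rw [psi]
  field_simp

lemma hasDerivAt_psi (hs : s ∈ Ioo (-1) 1) :
    HasDerivAt psi
      (√2 * cos (thirdArcsin s) / (cos (2 * thirdArcsin s) * √(cos (2 * thirdArcsin s))) /
        (3 * cos (3 * thirdArcsin s))) s :=
  hasDerivAt_comp_thirdArcsin (hasDerivAt_psiAngle (cos_two_mul_thirdArcsin_pos s)) hs

lemma one_div_six_le_deriv_deriv_phi (hs : s ∈ Ioo (-1) 1) : 1 / 6 ≤ deriv (deriv phi) s := by
  have hev : deriv phi =ᶠ[𝓝 s] psi :=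
    eventually_of_mem (isOpen_Ioo.mem_nhds hs) fun t ht => (hasDerivAt_phi ht).deriv
  rw [hev.deriv_eq, (hasDerivAt_psi hs).deriv]
  exact one_div_six_le_of_mem_Icc (thirdArcsin_mem s) (cos_three_mul_thirdArcsin_pos hs)

lemma image_sin_three_mul :
    (fun w => sin (3 * w)) '' Icc (-(π / 6)) (π / 6) = Icc (-1) 1 := by
  refine Subset.antisymm ?_
    fun s hs => ⟨thirdArcsin s, thirdArcsin_mem s, sin_three_mul_thirdArcsin hs⟩
  rintro _ ⟨w, -, rfl⟩
  exact ⟨neg_one_le_sin _, sin_le_one _⟩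

noncomputable def arcPoint (w : ℝ) : ℝ × ℝ := (-(√2 * sin w), √(cos (2 * w)))

lemma arcPoint_mem_circle (hw : 0 ≤ cos (2 * w)) :
    (arcPoint w).1 ^ 2 + (arcPoint w).2 ^ 2 = 1 := by
  rw [arcPoint, neg_sq, mul_pow, sq_sqrt zero_le_two, sq_sqrt hw, cos_two_mul_eq_one_sub]
  ring

lemma image_arcPoint :
    arcPoint '' Icc (-(π / 6)) (π / 6) = {x : ℝ × ℝ | x.1 ^ 2 + x.2 ^ 2 = 1 ∧ |x.1| ≤ x.2} := by
  ext x
  constructor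
  · rintro ⟨w, hw, rfl⟩
    have hc := half_le_cos_two_mul hw
    refine ⟨arcPoint_mem_circle (by linarith), abs_le_sqrt ?_⟩
    rw [arcPoint, neg_sq, mul_pow, sq_sqrt zero_le_two, cos_two_mul_eq_one_sub]
    nlinarith [abs_sin_le_half hw, sq_abs (sin w), abs_nonneg (sin w)]
  · rintro ⟨hcirc, hle⟩
    have hx2 : 0 ≤ x.2 := (abs_nonneg _).trans hle
    have hsqrt2 : √2 ^ 2 = 2 := sq_sqrt zero_le_two
    have hu : -(1 / 2) ≤ -x.1 / √2 ∧ -x.1 / √2 ≤ 1 / 2 := by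
      refine abs_le_of_sq_le_sq' ?_ one_half_pos.le
      rw [div_pow, hsqrt2]
      nlinarith [sq_abs x.1, abs_nonneg x.1]
    have hsin : sin (arcsin (-x.1 / √2)) = -x.1 / √2 := sin_arcsin (by linarith) (by linarith)
    refine ⟨arcsin (-x.1 / √2), ⟨?_, ?_⟩, ?_⟩
    · rw [le_arcsin_iff_sin_le' ⟨by linarith [pi_pos], by linarith [pi_pos]⟩, sin_neg,
        sin_pi_div_six]
      exact hu.1
    · rw [arcsin_le_iff_le_sin' ⟨by linarith [pi_pos], by linarith [pi_pos]⟩, sin_pi_div_six]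
      exact hu.2
    · rw [arcPoint, cos_two_mul_eq_one_sub, hsin, div_pow, hsqrt2]
      refine Prod.ext (by field_simp) ?_
      change √(1 - 2 * ((-x.1) ^ 2 / 2)) = x.2
      rw [← sqrt_sq hx2]
      congr 1
      linear_combination -hcirc

lemma gradv_arcPoint (hw : w ∈ Icc (-(π / 6)) (π / 6)) :
    gradv (arcPoint w) = (sin (3 * w), phiAngle w) := by
  have hc := half_le_cos_two_mul hw
  rw [gradv_apply_of_mem_circle (arcPoint_mem_circle (by linarith)), arcPoint, phiAngle,
    Prod.mk.injEq]
  dsimp only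
  refine ⟨?_, by rw [sq_sqrt (by linarith)]⟩
  rw [sin_three_mul]
  field_simp
  rw [sq_sqrt zero_le_two]
  ring

end

lemma Gamma1_eq_graph_phi : Gamma1 = {p : ℝ × ℝ | ∃ s ∈ Icc (-1 : ℝ) 1, p = (s, phi s)} := by
  have hgraph : {p : ℝ × ℝ | ∃ s ∈ Icc (-1 : ℝ) 1, p = (s, phi s)} =
      (fun s => (s, phi s)) '' Icc (-1) 1 := by
    ext p
    simp only [mem_ofPred_eq, mem_image, eq_comm]
  rw [Gamma1, ← image_arcPoint, hgraph, ← image_sin_three_mul, image_image, image_image]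
  refine image_congr fun w hw => ?_
  rw [gradv_arcPoint hw, phi, thirdArcsin_sin_three_mul hw]

/-- `Γ₁` is the graph over `[-1,1]` of an even function `φ`, smooth and uniformly convex on
`(-1,1)`, `C¹` up to the endpoints (with derivative `ψ`), with `φ(±1) = 1`, `φ'(±1) = ±1`. -/
theorem stmt10 :
    ∃ φ ψ : ℝ → ℝ,
      (∀ s, φ (-s) = φ s) ∧
      ContDiffOn ℝ (⊤ : ℕ∞) φ (Ioo (-1) 1) ∧
      (∃ c > (0 : ℝ), ∀ s ∈ Ioo (-1 : ℝ) 1, c ≤ deriv (deriv φ) s) ∧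
      ContinuousOn φ (Icc (-1) 1) ∧ ContinuousOn ψ (Icc (-1) 1) ∧
      (∀ s ∈ Icc (-1 : ℝ) 1, HasDerivWithinAt φ (ψ s) (Icc (-1) 1) s) ∧
      φ 1 = 1 ∧ φ (-1) = 1 ∧ ψ 1 = 1 ∧ ψ (-1) = -1 ∧
      Gamma1 = {p : ℝ × ℝ | ∃ s ∈ Icc (-1 : ℝ) 1, p = (s, φ s)} := by
  refine ⟨phi, psi, phi_neg, contDiffOn_phi.of_le le_top,
    ⟨1 / 6, by norm_num, fun s hs => one_div_six_le_deriv_deriv_phi hs⟩,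
    continuous_phi.continuousOn, continuous_psi.continuousOn,
    fun s hs => hasDerivWithinAt_Icc_of_hasDerivAt_Ioo (by norm_num) continuous_phi.continuousOn
      continuous_psi.continuousOn (fun t ht => hasDerivAt_phi ht) hs,
    phi_one, by rw [phi_neg, phi_one], psi_one, by rw [psi_neg, psi_one],
    Gamma1_eq_graph_phi⟩
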